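/- arXiv:2604.21395 — 2 statements merged into one kernel-verified Lean document; each statement's English description precedes it below -/
import Mathlib

section
/- Let d_s, d_n be positive integers, let the input (s, n, ε) be distributed as the product of the standard Gaussian product measure on ℝ^{d_s} (each coordinate Gaussian with mean 0 and variance 1), the standard Gaussian product measure on ℝ^{d_n}, and the real Gaussian measure with mean 0 and variance σ_ε² ≥ 0. Let w_s ∈ ℝ^{d_s}, let w_n ∈ ℝ^{d_n} with ‖w_n‖₂ = 1, let ρ > 0, and set y = ⟨w_s, s⟩ + ρ·⟨w_n, n⟩ + ε. Then for every measurable g : ℝ^{d_s} → ℝ with g(s) square-integrable, the mean squared error satisfies E[(g(s) − y)²] ≥ ρ² + σ_ε². In particular, every predictor depending only on the signal s pays excess squared loss at least ρ² above the Bayes risk σ_ε². -/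
/-!
Write `y = a(s) + b(n, ε)` with `a(s) = ⟨w_s, s⟩` and `b(n, ε) = ρ⟨w_n, n⟩ + ε`. Under the product
measure `b` is independent of `s`, so for any predictor the residual `(g - a)(s) - b(n, ε)` has
second moment at least its variance `Var[g - a] + Var[b] ≥ Var[b] = ρ² ‖w_n‖² + σ_ε²`.
-/

open MeasureTheory ProbabilityTheory
open scoped NNReal ENNReal

section WeightedSumPi

variable {ι : Type*} [Fintype ι] {m : ι → Measure ℝ} [∀ i, IsProbabilityMeasure (m i)]

lemma memLp_sum_mul_eval_pi (hm : ∀ i, MemLp id 2 (m i)) (w : ι → ℝ) :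
    MemLp (fun x ↦ ∑ i, w i * x i) 2 (Measure.pi m) :=
  memLp_finsetSum _ fun i _ ↦
    ((hm i).comp_measurePreserving (measurePreserving_eval m i)).const_mul (w i)

lemma variance_sum_mul_eval_pi (hm : ∀ i, MemLp id 2 (m i)) (w : ι → ℝ) :
    Var[fun x ↦ ∑ i, w i * x i; Measure.pi m] = ∑ i, w i ^ 2 * Var[id; m i] := by
  have h := variance_sum_pi (X := fun i t ↦ w i * t) fun i ↦ (hm i).const_mul (w i)
  simp only [Finset.sum_fn] at h
  rw [h]
  exact Finset.sum_congr rfl fun i _ ↦ variance_const_mul (w i) id (m i)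

end WeightedSumPi

lemma MeasureTheory.MemLp.of_comp_fst {α β E : Type*} {mα : MeasurableSpace α}
    {mβ : MeasurableSpace β} [NormedAddCommGroup E] {μ : Measure α} {ν : Measure β}
    [IsProbabilityMeasure ν] {f : α → E} {p : ℝ≥0∞} (hf : AEStronglyMeasurable f μ)
    (h : MemLp (fun x ↦ f x.1) p (μ.prod ν)) : MemLp f p μ := by
  have hfst : (μ.prod ν).map Prod.fst = μ := by simp
  rw [← hfst] at hf ⊢
  exact (memLp_map_measure_iff hf measurable_fst.aemeasurable).2 h

lemma variance_le_integral_sq_sub_prod {α β : Type*} {mα : MeasurableSpace α}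
    {mβ : MeasurableSpace β} {μ : Measure α} {ν : Measure β} [IsProbabilityMeasure μ]
    [IsProbabilityMeasure ν] {f : α → ℝ} {h : β → ℝ} (hf : MemLp f 2 μ) (hh : MemLp h 2 ν) :
    Var[h; ν] ≤ ∫ p, (f p.1 - h p.2) ^ 2 ∂μ.prod ν := by
  have hsplit := variance_add_prod hf hh.neg
  calc Var[h; ν] ≤ Var[f; μ] + Var[-h; ν] := by
        rw [variance_neg]; linarith [variance_nonneg f μ]
    _ = Var[fun p ↦ f p.1 - h p.2; μ.prod ν] := by
        rw [← hsplit]; simp only [Pi.neg_apply, sub_eq_add_neg]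
    _ ≤ ∫ p, (f p.1 - h p.2) ^ 2 ∂μ.prod ν :=
        variance_le_expectation_sq ((hf.comp_fst ν).sub (hh.comp_snd μ)).1

theorem nuisance_blind_excess_loss_general {ds dn : ℕ}
    (w_s : Fin ds → ℝ) (w_n : Fin dn → ℝ)
    (hwn : Real.sqrt (∑ i, w_n i ^ 2) = 1)
    (ρ : ℝ) (vε : ℝ≥0)
    (μ : Measure ((Fin ds → ℝ) × (Fin dn → ℝ) × ℝ))
    (hμ : μ = (Measure.pi fun _ : Fin ds => gaussianReal 0 1).prod
        ((Measure.pi fun _ : Fin dn => gaussianReal 0 1).prod (gaussianReal 0 vε)))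
    (g : (Fin ds → ℝ) → ℝ) (hg : Measurable g)
    (hg2 : MemLp (fun ω : (Fin ds → ℝ) × (Fin dn → ℝ) × ℝ => g ω.1) 2 μ) :
    ρ ^ 2 + (vε : ℝ) ≤
      ∫ ω, (g ω.1 -
        ((∑ i, w_s i * ω.1 i) + ρ * (∑ i, w_n i * ω.2.1 i) + ω.2.2)) ^ 2 ∂μ := by
  subst hμ
  have hnorm : ∑ i, w_n i ^ 2 = 1 := by rwa [← Real.sqrt_eq_one]
  have hstd {k : ℕ} (_ : Fin k) : MemLp id 2 (gaussianReal 0 1) := memLp_id_gaussianReal 2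
  have hsignal := (hg2.of_comp_fst hg.aestronglyMeasurable).sub (memLp_sum_mul_eval_pi hstd w_s)
  have hproj := (memLp_sum_mul_eval_pi hstd w_n).const_mul ρ
  have hnoise : MemLp id 2 (gaussianReal 0 vε) := memLp_id_gaussianReal 2
  calc ρ ^ 2 + (vε : ℝ) = Var[fun p ↦ ρ * (∑ i, w_n i * p.1 i) + id p.2;
        (Measure.pi fun _ : Fin dn => gaussianReal 0 1).prod (gaussianReal 0 vε)] := by
        rw [variance_add_prod hproj hnoise, variance_const_mul, variance_sum_mul_eval_pi hstd]
        simp only [variance_id_gaussianReal, NNReal.coe_one, mul_one, hnorm]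
    _ ≤ _ := variance_le_integral_sq_sub_prod hsignal ((hproj.comp_fst _).add (hnoise.comp_snd _))
    _ = _ := by
        congr 1
        funext ω
        simp only [Pi.sub_apply, id]
        ring

theorem nuisance_blind_excess_loss {ds dn : ℕ} (hds : 0 < ds) (hdn : 0 < dn)
    (w_s : Fin ds → ℝ) (w_n : Fin dn → ℝ)
    (hwn : Real.sqrt (∑ i, w_n i ^ 2) = 1)
    (ρ : ℝ) (hρ : 0 < ρ) (vε : ℝ≥0)
    (μ : Measure ((Fin ds → ℝ) × (Fin dn → ℝ) × ℝ))
    (hμ : μ = (Measure.pi fun _ : Fin ds => gaussianReal 0 1).prod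
        ((Measure.pi fun _ : Fin dn => gaussianReal 0 1).prod (gaussianReal 0 vε)))
    (g : (Fin ds → ℝ) → ℝ) (hg : Measurable g)
    (hg2 : MemLp (fun ω : (Fin ds → ℝ) × (Fin dn → ℝ) × ℝ => g ω.1) 2 μ) :
    ρ ^ 2 + (vε : ℝ) ≤
      ∫ ω, (g ω.1 -
        ((∑ i, w_s i * ω.1 i) + ρ * (∑ i, w_n i * ω.2.1 i) + ω.2.2)) ^ 2 ∂μ :=
  nuisance_blind_excess_loss_general w_s w_n hwn ρ vε μ hμ g hg hg2
end

section
/- Let φ : ℝ^d → ℝ^m be everywhere differentiable and suppose its derivative is β-Lipschitz in the sense that ‖Dφ(x) − Dφ(y)‖_F ≤ β·‖x − y‖₂ for all x, y. Fix x ∈ ℝ^d and σ > 0, let δ be distributed according to the product measure on ℝ^d with i.i.d. Gaussian coordinates of mean 0 and variance σ², and set G := ‖Dφ(x)‖_F. Then | E_δ[‖φ(x + δ) − φ(x)‖₂²] − σ²·G² | ≤ β·G·E[‖δ‖₂³] + (β²/4)·E[‖δ‖₂⁴]; in particular, since E[‖δ‖₂⁴] = d(d+2)σ⁴, the deviation of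 the exact embedding drift from its linearisation σ²·‖Dφ(x)‖_F² is O(σ³) with explicit constants depending only on β, G and d. -/
open MeasureTheory ProbabilityTheory

/-- Squared Frobenius norm of a continuous linear map between Euclidean
spaces, computed in the standard orthonormal basis of the domain. -/
noncomputable def clmFrobeniusSq {d m : ℕ}
    (T : EuclideanSpace ℝ (Fin d) →L[ℝ] EuclideanSpace ℝ (Fin m)) : ℝ :=
  ∑ j : Fin d, ‖T (EuclideanSpace.single j 1)‖ ^ 2

open scoped NNReal

/-! Taylor's theorem with a `β`-Lipschitz derivative bounds the remainder
`r = φ (x + δ) - φ x - Dφ(x) δ` by `β/2 ‖δ‖²`, and `|‖a‖² - ‖b‖²| ≤ 2 ‖b‖ ‖a - b‖ + ‖a - b‖²` with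
`‖Dφ(x) δ‖ ≤ G ‖δ‖` (the operator norm is at most the Frobenius norm) turns this into the pointwise
bound `|‖φ (x + δ) - φ x‖² - ‖Dφ(x) δ‖²| ≤ β G ‖δ‖³ + β²/4 ‖δ‖⁴`, which is then integrated.
The coordinates of `δ` are independent centred Gaussians of variance `σ²`, so
`E ‖Dφ(x) δ‖² = σ² ‖Dφ(x)‖_F²`, and `E ‖δ‖⁴ = Var (∑ δⱼ²) + (E ∑ δⱼ²)² = 2dσ⁴ + d²σ⁴`
because `E δⱼ⁴ = 3σ⁴`, read off from the fourth derivative of the moment generating function. -/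

lemma abs_norm_sq_sub_norm_sq_le {E : Type*} [SeminormedAddCommGroup E] (a b : E) :
    |‖a‖ ^ 2 - ‖b‖ ^ 2| ≤ 2 * ‖b‖ * ‖a - b‖ + ‖a - b‖ ^ 2 := by
  have hsum : ‖a‖ + ‖b‖ ≤ 2 * ‖b‖ + ‖a - b‖ := by linarith [norm_le_insert' a b]
  calc |‖a‖ ^ 2 - ‖b‖ ^ 2| = |‖a‖ - ‖b‖| * (‖a‖ + ‖b‖) := by
        rw [sq_sub_sq, abs_mul, abs_of_nonneg (by positivity : 0 ≤ ‖a‖ + ‖b‖), mul_comm]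
    _ ≤ ‖a - b‖ * (2 * ‖b‖ + ‖a - b‖) :=
        mul_le_mul (abs_norm_sub_norm_le a b) hsum (by positivity) (norm_nonneg _)
    _ = 2 * ‖b‖ * ‖a - b‖ + ‖a - b‖ ^ 2 := by ring

lemma norm_apply_le_sqrt_clmFrobeniusSq_mul_norm {d m : ℕ}
    (T : EuclideanSpace ℝ (Fin d) →L[ℝ] EuclideanSpace ℝ (Fin m)) (u : EuclideanSpace ℝ (Fin d)) :
    ‖T u‖ ≤ √(clmFrobeniusSq T) * ‖u‖ := by
  have hT : T u = ∑ j, u j • T (EuclideanSpace.single j 1) := by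
    conv_lhs => rw [← (EuclideanSpace.basisFun (Fin d) ℝ).sum_repr u]
    simp
  calc ‖T u‖ ≤ ∑ j, ‖u j‖ * ‖T (EuclideanSpace.single j 1)‖ := by
        rw [hT]; exact (norm_sum_le _ _).trans_eq (by simp only [norm_smul])
    _ ≤ √(∑ j, ‖u j‖ ^ 2) * √(clmFrobeniusSq T) := Real.sum_mul_le_sqrt_mul_sqrt _ _ _
    _ = √(clmFrobeniusSq T) * ‖u‖ := by rw [EuclideanSpace.norm_eq, mul_comm]

lemma opNorm_le_sqrt_clmFrobeniusSq {d m : ℕ}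
    (T : EuclideanSpace ℝ (Fin d) →L[ℝ] EuclideanSpace ℝ (Fin m)) :
    ‖T‖ ≤ √(clmFrobeniusSq T) :=
  T.opNorm_le_bound (Real.sqrt_nonneg _) (norm_apply_le_sqrt_clmFrobeniusSq_mul_norm T)

section Taylor

variable {E F : Type*} [NormedAddCommGroup E] [NormedSpace ℝ E] [NormedAddCommGroup F]
  [NormedSpace ℝ F] {f : E → F} {x : E} {β : ℝ}

lemma norm_sub_sub_fderiv_apply_le (hf : Differentiable ℝ f)
    (hlip : ∀ y, ‖fderiv ℝ f y - fderiv ℝ f x‖ ≤ β * ‖y - x‖) (δ : E) :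
    ‖f (x + δ) - f x - fderiv ℝ f x δ‖ ≤ β / 2 * ‖δ‖ ^ 2 := by
  set T := fderiv ℝ f x
  let g : ℝ → F := fun t => f (x + t • δ) - f x - t • T δ
  have hg (t : ℝ) : HasDerivAt g ((fderiv ℝ f (x + t • δ) - T) δ) t := by
    have hline : HasDerivAt (fun t : ℝ => x + t • δ) δ t := by
      simpa using ((hasDerivAt_id t).smul_const δ).const_add x
    exact ((((hf _).hasFDerivAt.comp_hasDerivAt t hline).sub_const (f x)).fun_sub
      ((hasDerivAt_id' t).smul_const (T δ))).congr_deriv (by simp)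
  have hbound (t : ℝ) (ht : t ∈ Set.Ico (0 : ℝ) 1) :
      ‖(fderiv ℝ f (x + t • δ) - T) δ‖ ≤ β * ‖δ‖ ^ 2 * t := by
    have hdist : ‖x + t • δ - x‖ = t * ‖δ‖ := by
      rw [add_sub_cancel_left, norm_smul, Real.norm_of_nonneg ht.1]
    calc ‖(fderiv ℝ f (x + t • δ) - T) δ‖ ≤ ‖fderiv ℝ f (x + t • δ) - T‖ * ‖δ‖ :=
          ContinuousLinearMap.le_opNorm _ _
      _ ≤ β * (t * ‖δ‖) * ‖δ‖ := by
          gcongr; rw [← hdist]; exact hlip _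
      _ = β * ‖δ‖ ^ 2 * t := by ring
  have hB (t : ℝ) : HasDerivAt (fun t => β / 2 * ‖δ‖ ^ 2 * t ^ 2) (β * ‖δ‖ ^ 2 * t) t :=
    ((hasDerivAt_pow 2 t).const_mul (β / 2 * ‖δ‖ ^ 2)).congr_deriv (by ring)
  have := image_norm_le_of_norm_deriv_right_le_deriv_boundary
    (fun t _ => (hg t).continuousAt.continuousWithinAt) (fun t _ => (hg t).hasDerivWithinAt)
    (by simp [g]) hB hbound (Set.right_mem_Icc.2 zero_le_one)
  simpa [g] using this

lemma abs_norm_sub_sq_sub_norm_fderiv_apply_sq_le (hf : Differentiable ℝ f)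
    (hlip : ∀ y, ‖fderiv ℝ f y - fderiv ℝ f x‖ ≤ β * ‖y - x‖) {G : ℝ}
    (hG : ‖fderiv ℝ f x‖ ≤ G) (δ : E) :
    |‖f (x + δ) - f x‖ ^ 2 - ‖fderiv ℝ f x δ‖ ^ 2| ≤ β * G * ‖δ‖ ^ 3 + β ^ 2 / 4 * ‖δ‖ ^ 4 := by
  have hrem := norm_sub_sub_fderiv_apply_le hf hlip δ
  have hlin : ‖fderiv ℝ f x δ‖ ≤ G * ‖δ‖ := (ContinuousLinearMap.le_opNorm _ _).trans (by gcongr)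
  calc _ ≤ 2 * ‖fderiv ℝ f x δ‖ * ‖f (x + δ) - f x - fderiv ℝ f x δ‖
          + ‖f (x + δ) - f x - fderiv ℝ f x δ‖ ^ 2 := abs_norm_sq_sub_norm_sq_le _ _
    _ ≤ 2 * (G * ‖δ‖) * (β / 2 * ‖δ‖ ^ 2) + (β / 2 * ‖δ‖ ^ 2) ^ 2 := by
        have := (norm_nonneg _).trans hrem
        have := (norm_nonneg _).trans hG
        gcongr
    _ = β * G * ‖δ‖ ^ 3 + β ^ 2 / 4 * ‖δ‖ ^ 4 := by ring

end Taylor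

lemma abs_integral_sub_integral_le {α : Type*} [MeasurableSpace α] {μ : Measure α}
    {f g h : α → ℝ} (hf : AEStronglyMeasurable f μ) (hg : Integrable g μ) (hh : Integrable h μ)
    (hfg : ∀ a, |f a - g a| ≤ h a) : |∫ a, f a ∂μ - ∫ a, g a ∂μ| ≤ ∫ a, h a ∂μ := by
  have hfi : Integrable f μ := (hg.norm.add hh).mono' hf (Filter.Eventually.of_forall fun a => by
    have := hfg a
    simp only [Real.norm_eq_abs, Pi.add_apply]
    linarith [abs_sub_abs_le_abs_sub (f a) (g a)])
  rw [← integral_sub hfi hg]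
  exact (abs_integral_le_integral_abs).trans
    (integral_mono_of_nonneg (Filter.Eventually.of_forall fun _ => abs_nonneg _) hh
      (Filter.Eventually.of_forall hfg))

lemma iteratedDeriv_four_exp_mul_sq_zero (c : ℝ) :
    iteratedDeriv 4 (fun t => Real.exp (c * t ^ 2)) 0 = 12 * c ^ 2 := by
  set e := fun t => Real.exp (c * t ^ 2)
  have he (t : ℝ) : HasDerivAt e (2 * c * t * e t) t :=
    ((hasDerivAt_pow 2 t).const_mul c).exp.congr_deriv (by simp [e]; ring)
  have hmul {p : ℝ → ℝ} (p' : ℝ → ℝ) (hp : ∀ t, HasDerivAt p (p' t) t) :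
      deriv (fun t => p t * e t) = fun t => (p' t + 2 * c * t * p t) * e t :=
    funext fun t => ((hp t).mul (he t)).deriv.trans (by ring)
  have h1 : deriv e = fun t => (2 * c * t) * e t := funext fun t => (he t).deriv
  have h2 : deriv (fun t => (2 * c * t) * e t)
      = fun t => (2 * c + 4 * c ^ 2 * t ^ 2) * e t := by
    rw [hmul (fun _ => 2 * c) fun t => ((hasDerivAt_id' t).const_mul (2 * c)).congr_deriv (by simp)]
    funext t; ring
  have h3 : deriv (fun t => (2 * c + 4 * c ^ 2 * t ^ 2) * e t)
      = fun t => (12 * c ^ 2 * t + 8 * c ^ 3 * t ^ 3) * e t := by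
    rw [hmul (fun t => 8 * c ^ 2 * t) fun t =>
      (((hasDerivAt_pow 2 t).const_mul (4 * c ^ 2)).const_add (2 * c)).congr_deriv
        (by norm_num; ring)]
    funext t; ring
  have h4 : deriv (fun t => (12 * c ^ 2 * t + 8 * c ^ 3 * t ^ 3) * e t) 0 = 12 * c ^ 2 := by
    rw [hmul (fun t => 12 * c ^ 2 + 24 * c ^ 3 * t ^ 2) fun t =>
      (((hasDerivAt_id' t).const_mul (12 * c ^ 2)).fun_add
        ((hasDerivAt_pow 3 t).const_mul (8 * c ^ 3))).congr_deriv (by norm_num; ring)]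
    simp [e]
  rw [iteratedDeriv_succ', h1, iteratedDeriv_succ', h2, iteratedDeriv_succ', h3,
    iteratedDeriv_one, h4]

lemma integral_pow_four_gaussianReal (v : ℝ≥0) :
    ∫ x, x ^ 4 ∂gaussianReal 0 v = 3 * (v : ℝ) ^ 2 := by
  have hmgf : mgf (fun x => x) (gaussianReal 0 v) = fun t => Real.exp ((v / 2 : ℝ) * t ^ 2) := by
    rw [mgf_fun_id_gaussianReal]; funext t; ring_nf
  have hmoment := iteratedDeriv_mgf_zero (X := fun x => x) (μ := gaussianReal 0 v) (by simp) 4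
  rw [hmgf, iteratedDeriv_four_exp_mul_sq_zero] at hmoment
  simp only [Pi.pow_apply] at hmoment
  linarith

lemma integral_sq_gaussianReal (v : ℝ≥0) : ∫ x, x ^ 2 ∂gaussianReal 0 v = v := by
  simpa using (variance_eq_sub (memLp_id_gaussianReal (μ := 0) (v := v) 2)).symm

lemma memLp_sq_gaussianReal (v : ℝ≥0) : MemLp (fun x : ℝ => x ^ 2) 2 (gaussianReal 0 v) := by
  refine (memLp_two_iff_integrable_sq (by fun_prop)).2 ?_
  simpa [← pow_mul, Even.pow_abs ⟨2, rfl⟩] using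
    (memLp_id_gaussianReal (μ := 0) (v := v) 4).integrable_norm_pow four_ne_zero

lemma integral_sq_eq_variance_add_sq {Ω : Type*} [MeasurableSpace Ω] {μ : Measure Ω}
    [IsProbabilityMeasure μ] {X : Ω → ℝ} (hX : MemLp X 2 μ) :
    ∫ ω, X ω ^ 2 ∂μ = Var[X; μ] + (∫ ω, X ω ∂μ) ^ 2 := by
  rw [variance_eq_sub hX]; simp

lemma integral_sq_sum_pi {ι : Type*} [Fintype ι] {Ω : ι → Type*} [∀ i, MeasurableSpace (Ω i)]
    {μ : ∀ i, Measure (Ω i)} [∀ i, IsProbabilityMeasure (μ i)] {X : ∀ i, Ω i → ℝ}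
    (hX : ∀ i, MemLp (X i) 2 (μ i)) :
    ∫ ω, (∑ i, X i (ω i)) ^ 2 ∂Measure.pi μ = ∑ i, Var[X i; μ i] + (∑ i, ∫ x, X i x ∂μ i) ^ 2 := by
  have hXi (i : ι) : MemLp (fun ω : ∀ i, Ω i => X i (ω i)) 2 (Measure.pi μ) :=
    (hX i).comp_measurePreserving (measurePreserving_eval _ i)
  rw [integral_sq_eq_variance_add_sq (memLp_finsetSum _ fun i _ => hXi i), ← Finset.sum_fn,
    variance_sum_pi hX, Finset.sum_fn,
    integral_finsetSum _ fun i _ => (hXi i).integrable one_le_two]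
  congr 2
  exact Finset.sum_congr rfl fun i _ => integral_comp_eval (hX i).aestronglyMeasurable

section PiGaussian

variable {ι : Type*} [Fintype ι] (v : ℝ≥0)

lemma integral_sq_sum_mul_pi_gaussianReal (a : ι → ℝ) :
    ∫ u, (∑ j, a j * u j) ^ 2 ∂(Measure.pi fun _ : ι => gaussianReal 0 v) = v * ∑ j, a j ^ 2 := by
  rw [integral_sq_sum_pi (X := fun j x => a j * x) fun j =>
    (memLp_id_gaussianReal 2).const_mul (a j)]
  have hvar (j : ι) : Var[fun x => a j * x; gaussianReal 0 v] = v * a j ^ 2 := by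
    rw [variance_const_mul, variance_fun_id_gaussianReal, mul_comm]
  have hmean (j : ι) : ∫ x, a j * x ∂gaussianReal 0 v = 0 := by
    rw [integral_const_mul, integral_id_gaussianReal, mul_zero]
  simp [hvar, hmean, Finset.mul_sum]

lemma integral_sq_sum_sq_pi_gaussianReal :
    ∫ u, (∑ j, u j ^ 2) ^ 2 ∂(Measure.pi fun _ : ι => gaussianReal 0 v)
      = Fintype.card ι * (Fintype.card ι + 2) * (v : ℝ) ^ 2 := by
  rw [integral_sq_sum_pi (X := fun _ x => x ^ 2) fun _ => memLp_sq_gaussianReal v]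
  simp [variance_eq_sub (memLp_sq_gaussianReal v), ← pow_mul, integral_pow_four_gaussianReal,
    integral_sq_gaussianReal]
  ring

end PiGaussian

noncomputable def isotropicGaussian (ι : Type*) [Fintype ι] (v : ℝ≥0) :
    Measure (EuclideanSpace ℝ ι) :=
  (Measure.pi fun _ : ι => gaussianReal 0 v).map (MeasurableEquiv.toLp 2 (ι → ℝ))

section IsotropicGaussian

variable {ι : Type*} [Fintype ι] (v : ℝ≥0)

lemma memLp_id_isotropicGaussian (p : ENNReal) (hp : p ≠ ⊤) :
    MemLp id p (isotropicGaussian ι v) :=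
  (memLp_map_measure_iff aestronglyMeasurable_id (by fun_prop)).2 <| MemLp.of_eval_piLp fun j =>
    (memLp_id_gaussianReal' p hp).comp_measurePreserving (measurePreserving_eval _ j)

lemma integral_norm_pow_four_isotropicGaussian :
    ∫ δ, ‖δ‖ ^ 4 ∂isotropicGaussian ι v = Fintype.card ι * (Fintype.card ι + 2) * (v : ℝ) ^ 2 := by
  rw [isotropicGaussian, integral_map_equiv]
  simp_rw [show (4 : ℕ) = 2 * 2 from rfl, pow_mul, EuclideanSpace.real_norm_sq_eq]
  exact integral_sq_sum_sq_pi_gaussianReal v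

variable [DecidableEq ι] {κ : Type*}

lemma ContinuousLinearMap.apply_toLp_apply (T : EuclideanSpace ℝ ι →L[ℝ] EuclideanSpace ℝ κ)
    (u : ι → ℝ) (i : κ) :
    T (WithLp.toLp 2 u) i = ∑ j, T (EuclideanSpace.single j 1) i * u j := by
  conv_lhs => rw [← (EuclideanSpace.basisFun ι ℝ).sum_repr (WithLp.toLp 2 u)]
  simp [map_sum, mul_comm]

lemma integral_norm_sq_apply_isotropicGaussian [Fintype κ]
    (T : EuclideanSpace ℝ ι →L[ℝ] EuclideanSpace ℝ κ) :
    ∫ δ, ‖T δ‖ ^ 2 ∂isotropicGaussian ι v = v * ∑ j, ‖T (EuclideanSpace.single j 1)‖ ^ 2 := by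
  have hint (i : κ) : Integrable
      (fun u : ι → ℝ => (∑ j, T (EuclideanSpace.single j 1) i * u j) ^ 2)
      (Measure.pi fun _ : ι => gaussianReal 0 v) :=
    (memLp_finsetSum _ fun j _ => ((memLp_id_gaussianReal 2).const_mul _).comp_measurePreserving
      (measurePreserving_eval _ j)).integrable_sq
  rw [isotropicGaussian, integral_map_equiv]
  simp_rw [MeasurableEquiv.toLp_apply, EuclideanSpace.real_norm_sq_eq,
    ContinuousLinearMap.apply_toLp_apply]
  rw [integral_finsetSum _ fun i _ => hint i]
  simp_rw [integral_sq_sum_mul_pi_gaussianReal, ← Finset.mul_sum]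
  rw [Finset.sum_comm]

end IsotropicGaussian

theorem linearised_drift_remainder_bound_general {d m : ℕ}
    (φ : EuclideanSpace ℝ (Fin d) → EuclideanSpace ℝ (Fin m))
    (hφ : Differentiable ℝ φ) (β : ℝ)
    (hlip : ∀ x y, Real.sqrt (clmFrobeniusSq (fderiv ℝ φ x - fderiv ℝ φ y))
      ≤ β * ‖x - y‖)
    (x : EuclideanSpace ℝ (Fin d)) (σ : ℝ)
    (μ : Measure (EuclideanSpace ℝ (Fin d)))
    (hμ : μ = Measure.map (MeasurableEquiv.toLp 2 (Fin d → ℝ))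
        (Measure.pi fun _ : Fin d => gaussianReal 0 (Real.toNNReal (σ ^ 2))))
    (G : ℝ) (hG : G = Real.sqrt (clmFrobeniusSq (fderiv ℝ φ x))) :
    |(∫ δ, ‖φ (x + δ) - φ x‖ ^ 2 ∂μ) - σ ^ 2 * G ^ 2| ≤
        β * G * (∫ δ, ‖δ‖ ^ 3 ∂μ) + (β ^ 2 / 4) * (∫ δ, ‖δ‖ ^ 4 ∂μ) ∧
      (∫ δ, ‖δ‖ ^ 4 ∂μ) = d * (d + 2) * σ ^ 4 := by
  change μ = isotropicGaussian (Fin d) (σ ^ 2).toNNReal at hμ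
  have hv : ((σ ^ 2).toNNReal : ℝ) = σ ^ 2 := Real.coe_toNNReal _ (sq_nonneg σ)
  set T := fderiv ℝ φ x
  have hTG : ‖T‖ ≤ G := hG ▸ opNorm_le_sqrt_clmFrobeniusSq T
  have hG2 : G ^ 2 = clmFrobeniusSq T :=
    hG ▸ Real.sq_sqrt (Finset.sum_nonneg fun _ _ => sq_nonneg _)
  have hmemLp (n : ℕ) : MemLp id n μ := hμ ▸ memLp_id_isotropicGaussian _ n (by simp)
  have hlip' (y) : ‖fderiv ℝ φ y - T‖ ≤ β * ‖y - x‖ :=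
    (opNorm_le_sqrt_clmFrobeniusSq _).trans (hlip y x)
  have hmom (n : ℕ) (hn : n ≠ 0) : Integrable (fun δ => ‖δ‖ ^ n) μ :=
    (hmemLp n).integrable_norm_pow hn
  have hφc := hφ.continuous
  refine ⟨?_, by rw [hμ, integral_norm_pow_four_isotropicGaussian, hv, Fintype.card_fin]; ring⟩
  calc |(∫ δ, ‖φ (x + δ) - φ x‖ ^ 2 ∂μ) - σ ^ 2 * G ^ 2|
      = |(∫ δ, ‖φ (x + δ) - φ x‖ ^ 2 ∂μ) - ∫ δ, ‖T δ‖ ^ 2 ∂μ| := by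
        rw [hμ, integral_norm_sq_apply_isotropicGaussian, hv, hG2, clmFrobeniusSq]
    _ ≤ ∫ δ, (β * G * ‖δ‖ ^ 3 + β ^ 2 / 4 * ‖δ‖ ^ 4) ∂μ :=
        abs_integral_sub_integral_le (by fun_prop)
          ((T.comp_memLp' (hmemLp 2)).integrable_norm_pow two_ne_zero)
          (((hmom 3 three_ne_zero).const_mul _).add ((hmom 4 four_ne_zero).const_mul _))
          (abs_norm_sub_sq_sub_norm_fderiv_apply_sq_le hφ hlip' hTG)
    _ = β * G * (∫ δ, ‖δ‖ ^ 3 ∂μ) + (β ^ 2 / 4) * (∫ δ, ‖δ‖ ^ 4 ∂μ) := by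
        rw [integral_add ((hmom 3 three_ne_zero).const_mul _) ((hmom 4 four_ne_zero).const_mul _),
          integral_const_mul, integral_const_mul]

theorem linearised_drift_remainder_bound {d m : ℕ} (hd : 0 < d) (hm : 0 < m)
    (φ : EuclideanSpace ℝ (Fin d) → EuclideanSpace ℝ (Fin m))
    (hφ : Differentiable ℝ φ) (β : ℝ) (hβ : 0 ≤ β)
    (hlip : ∀ x y, Real.sqrt (clmFrobeniusSq (fderiv ℝ φ x - fderiv ℝ φ y))
      ≤ β * ‖x - y‖)
    (x : EuclideanSpace ℝ (Fin d)) (σ : ℝ) (hσ : 0 < σ)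
    (μ : Measure (EuclideanSpace ℝ (Fin d)))
    (hμ : μ = Measure.map (MeasurableEquiv.toLp 2 (Fin d → ℝ))
        (Measure.pi fun _ : Fin d => gaussianReal 0 (Real.toNNReal (σ ^ 2))))
    (G : ℝ) (hG : G = Real.sqrt (clmFrobeniusSq (fderiv ℝ φ x))) :
    |(∫ δ, ‖φ (x + δ) - φ x‖ ^ 2 ∂μ) - σ ^ 2 * G ^ 2| ≤
        β * G * (∫ δ, ‖δ‖ ^ 3 ∂μ) + (β ^ 2 / 4) * (∫ δ, ‖δ‖ ^ 4 ∂μ) ∧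
      (∫ δ, ‖δ‖ ^ 4 ∂μ) = d * (d + 2) * σ ^ 4 :=
  linearised_drift_remainder_bound_general φ hφ β hlip x σ μ hμ G hG
end
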